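/- Lemma 1 (effect of PCA rank on estimated canonical correlations): For all ranks 1 ≤ r_x < r̃_1 ≤ p_x and 1 ≤ r_y < r̃_2 ≤ p_y, and every index i = 1, …, min(r_x, r_y), the i-th estimated canonical correlation is monotone in the PCA ranks: k̂_i(r̃_1, r̃_2) ≥ k̂_i(r_x, r_y). -/

import Mathlib

/-!
`G(r_x, r_y)` is the top-left `r_x × r_y` block of `G(r̃₁, r̃₂)`, so it suffices that the singular
values of a submatrix are bounded by those of the whole matrix. By the Courant–Fischer principle,
the `i`-th largest eigenvalue of `N Nᴴ` is the largest `r` for which some `(i+1)`-dimensional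
subspace satisfies `r ‖x‖² ≤ ‖Nᴴ x‖²`. Extending vectors by zero maps such a subspace for the
submatrix isometrically into the big space, and it can only increase `‖Nᴴ x‖`.
-/

open Matrix

/-- The `i`-th largest eigenvalue (0-indexed) of a Hermitian matrix. -/
noncomputable def eigDesc {n : ℕ} {A : Matrix (Fin n) (Fin n) ℂ} (hA : A.IsHermitian)
    (i : Fin n) : ℝ :=
  hA.eigenvalues (Tuple.sort hA.eigenvalues i.rev)

/-- The `i`-th largest estimated canonical correlation `k̂_i(r_x, r_y)` obtained after PCA
rank reduction to ranks `r_x` and `r_y`: the `i`-th largest singular value of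
`G = V_x(:,1:r_x)ᴴ V_y(:,1:r_y)`, i.e. the square root of the `i`-th largest eigenvalue
of `G Gᴴ`. -/
noncomputable def kHat {M px py : ℕ} (Vx : Matrix (Fin M) (Fin px) ℂ)
    (Vy : Matrix (Fin M) (Fin py) ℂ) (rx ry : ℕ) (hrx : rx ≤ px) (hry : ry ≤ py)
    (i : Fin rx) : ℝ :=
  Real.sqrt (eigDesc (isHermitian_mul_conjTranspose_self
    ((Vx.submatrix id (Fin.castLE hrx))ᴴ * (Vy.submatrix id (Fin.castLE hry)))) i)

open Module Submodule
open scoped InnerProductSpace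

namespace OrthonormalBasis

variable {ι 𝕜 E : Type*} [RCLike 𝕜] [NormedAddCommGroup E] [InnerProductSpace 𝕜 E] [Fintype ι]
  (b : OrthonormalBasis ι 𝕜 E)

lemma inner_eq_zero_of_mem_span_image {S : Set ι} {x : E} (hx : x ∈ span 𝕜 (b '' S)) {k : ι}
    (hk : k ∉ S) : ⟪b k, x⟫_𝕜 = 0 := by
  obtain ⟨l, hl, rfl⟩ := (Finsupp.mem_span_image_iff_linearCombination 𝕜).1 hx
  rw [b.orthonormal.inner_right_finsupp]
  exact Finsupp.notMem_support_iff.1 fun h => hk (hl h)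

lemma finrank_span_image (S : Finset ι) : finrank 𝕜 (span 𝕜 (b '' S)) = S.card := by
  have hli : LinearIndependent 𝕜 (fun s : (S : Set ι) => b s) :=
    b.orthonormal.linearIndependent.comp _ Subtype.val_injective
  rw [Set.image_eq_range, finrank_span_eq_card hli]
  simp

end OrthonormalBasis

namespace Matrix.IsHermitian

variable {n : Type*} [Fintype n] [DecidableEq n] {A : Matrix n n ℂ} (hA : A.IsHermitian)

lemma toEuclideanLin_eigenvectorBasis (k : n) :
    toEuclideanLin A (hA.eigenvectorBasis k) = (hA.eigenvalues k : ℂ) • hA.eigenvectorBasis k := by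
  rw [toLpLin_apply, hA.mulVec_eigenvectorBasis]
  rfl

lemma re_inner_toEuclideanLin_eq_sum (x : EuclideanSpace ℂ n) :
    (⟪x, toEuclideanLin A x⟫_ℂ).re =
      ∑ k, hA.eigenvalues k * ‖⟪hA.eigenvectorBasis k, x⟫_ℂ‖ ^ 2 := by
  have hT := isSymmetric_toEuclideanLin_iff.mpr hA
  rw [← hA.eigenvectorBasis.sum_inner_mul_inner, Complex.re_sum]
  refine Finset.sum_congr rfl fun k _ => ?_
  rw [← hT, toEuclideanLin_eigenvectorBasis, inner_smul_left, ← inner_conj_symm x,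
    Complex.conj_ofReal, mul_left_comm, Complex.conj_mul', ← Complex.ofReal_pow,
    ← Complex.ofReal_mul, Complex.ofReal_re]

lemma re_inner_toEuclideanLin_le_of_mem_span {S : Set n} {c : ℝ}
    (hS : ∀ k ∈ S, hA.eigenvalues k ≤ c) {x : EuclideanSpace ℂ n}
    (hx : x ∈ span ℂ (hA.eigenvectorBasis '' S)) :
    (⟪x, toEuclideanLin A x⟫_ℂ).re ≤ c * ‖x‖ ^ 2 := by
  rw [hA.re_inner_toEuclideanLin_eq_sum, ← hA.eigenvectorBasis.sum_sq_norm_inner_right,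
    Finset.mul_sum]
  refine Finset.sum_le_sum fun k _ => ?_
  by_cases hk : k ∈ S
  · exact mul_le_mul_of_nonneg_right (hS k hk) (by positivity)
  · simp [hA.eigenvectorBasis.inner_eq_zero_of_mem_span_image hx hk]

lemma le_re_inner_toEuclideanLin_of_mem_span {S : Set n} {c : ℝ}
    (hS : ∀ k ∈ S, c ≤ hA.eigenvalues k) {x : EuclideanSpace ℂ n}
    (hx : x ∈ span ℂ (hA.eigenvectorBasis '' S)) :
    c * ‖x‖ ^ 2 ≤ (⟪x, toEuclideanLin A x⟫_ℂ).re := by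
  rw [hA.re_inner_toEuclideanLin_eq_sum, ← hA.eigenvectorBasis.sum_sq_norm_inner_right,
    Finset.mul_sum]
  refine Finset.sum_le_sum fun k _ => ?_
  by_cases hk : k ∈ S
  · exact mul_le_mul_of_nonneg_right (hS k hk) (by positivity)
  · simp [hA.eigenvectorBasis.inner_eq_zero_of_mem_span_image hx hk]

end Matrix.IsHermitian

section CourantFischer

variable {n : ℕ} {A : Matrix (Fin n) (Fin n) ℂ} (hA : A.IsHermitian)

theorem le_eigDesc_of_le_finrank {i : Fin n} {r : ℝ}
    {W : Submodule ℂ (EuclideanSpace ℂ (Fin n))} (hW : (i : ℕ) + 1 ≤ finrank ℂ W)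
    (hr : ∀ x ∈ W, r * ‖x‖ ^ 2 ≤ (⟪x, toEuclideanLin A x⟫_ℂ).re) :
    r ≤ eigDesc hA i := by
  -- `Tuple.sort` orders the eigenvalues increasingly and `eigDesc hA i` is the one at position
  -- `i.rev`, so `U` is spanned by eigenvectors of the `n - i` smallest eigenvalues.
  set σ := Tuple.sort hA.eigenvalues
  set U := span ℂ (hA.eigenvectorBasis '' ↑((Finset.Iic i.rev).image σ))
  have hU : finrank ℂ U = n - i := by
    rw [OrthonormalBasis.finrank_span_image, Finset.card_image_of_injective _ σ.injective,
      Fin.card_Iic, Fin.val_rev]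
    omega
  obtain ⟨x, hxW, hxU, hx0⟩ : ∃ x ∈ W, x ∈ U ∧ x ≠ 0 := by
    by_contra! h
    have := Submodule.finrank_add_finrank_le_of_disjoint (Submodule.disjoint_def.2 h)
    rw [finrank_euclideanSpace_fin] at this
    omega
  refine le_of_mul_le_mul_right ((hr x hxW).trans
    (hA.re_inner_toEuclideanLin_le_of_mem_span ?_ hxU)) (by positivity)
  rintro k hk
  obtain ⟨j, hj, rfl⟩ := Finset.mem_image.1 hk
  exact Tuple.monotone_sort hA.eigenvalues (Finset.mem_Iic.1 hj)

theorem exists_finrank_eq_eigDesc_mul_le (i : Fin n) :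
    ∃ W : Submodule ℂ (EuclideanSpace ℂ (Fin n)), finrank ℂ W = i + 1 ∧
      ∀ x ∈ W, eigDesc hA i * ‖x‖ ^ 2 ≤ (⟪x, toEuclideanLin A x⟫_ℂ).re := by
  set σ := Tuple.sort hA.eigenvalues
  refine ⟨span ℂ (hA.eigenvectorBasis '' ↑((Finset.Ici i.rev).image σ)), ?_,
    fun x hx => hA.le_re_inner_toEuclideanLin_of_mem_span ?_ hx⟩
  · rw [OrthonormalBasis.finrank_span_image, Finset.card_image_of_injective _ σ.injective,
      Fin.card_Ici, Fin.val_rev]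
    omega
  · rintro k hk
    obtain ⟨j, hj, rfl⟩ := Finset.mem_image.1 hk
    exact Tuple.monotone_sort hA.eigenvalues (Finset.mem_Ici.1 hj)

theorem eigDesc_le_eigDesc_of_linearIsometry {m : ℕ} {B : Matrix (Fin m) (Fin m) ℂ}
    (hB : B.IsHermitian) (h : n ≤ m)
    (f : EuclideanSpace ℂ (Fin n) →ₗᵢ[ℂ] EuclideanSpace ℂ (Fin m))
    (hf : ∀ x, (⟪x, toEuclideanLin A x⟫_ℂ).re ≤ (⟪f x, toEuclideanLin B (f x)⟫_ℂ).re)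
    (i : Fin n) :
    eigDesc hA i ≤ eigDesc hB (Fin.castLE h i) := by
  obtain ⟨W, hWdim, hW⟩ := exists_finrank_eq_eigDesc_mul_le hA i
  refine le_eigDesc_of_le_finrank hB (W := W.map f.toLinearMap) ?_ ?_
  · rw [← (equivMapOfInjective _ f.injective W).finrank_eq, hWdim]
    rfl
  · rintro - ⟨x, hx, rfl⟩
    simpa using (hW x hx).trans (hf x)

end CourantFischer

namespace EuclideanSpace

variable {𝕜 ι κ : Type*} [RCLike 𝕜] [Fintype ι] [Fintype κ]

noncomputable def extendByZero (e : ι ↪ κ) : EuclideanSpace 𝕜 ι →ₗᵢ[𝕜] EuclideanSpace 𝕜 κ where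
  toLinearMap := (WithLp.linearEquiv 2 𝕜 (κ → 𝕜)).symm.toLinearMap ∘ₗ
    Function.ExtendByZero.linearMap 𝕜 e ∘ₗ (WithLp.linearEquiv 2 𝕜 (ι → 𝕜)).toLinearMap
  norm_map' x := by
    simp only [EuclideanSpace.norm_eq]
    congr 1
    refine (Fintype.sum_of_injective e e.injective _ _ (fun k hk => ?_) fun j => ?_).symm
    · simp [Function.extend_apply' _ _ _ hk]
    · simp [e.injective.extend_apply]

@[simp]
lemma extendByZero_apply_self (e : ι ↪ κ) (x : EuclideanSpace 𝕜 ι) (j : ι) :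
    extendByZero e x (e j) = x j := by
  simp [extendByZero, e.injective.extend_apply]

lemma extendByZero_apply_of_notMem_range {e : ι ↪ κ} (x : EuclideanSpace 𝕜 ι) {k : κ}
    (hk : k ∉ Set.range e) : extendByZero e x k = 0 := by
  simp [extendByZero, Function.extend_apply' _ _ _ hk]

end EuclideanSpace

namespace Matrix

lemma re_inner_toEuclideanLin_mul_conjTranspose_self {m d : Type*} [Fintype m] [DecidableEq m]
    [Fintype d] [DecidableEq d] (N : Matrix m d ℂ) (x : EuclideanSpace ℂ m) :
    (⟪x, toEuclideanLin (N * Nᴴ) x⟫_ℂ).re = ‖toEuclideanLin Nᴴ x‖ ^ 2 := by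
  have hN : toEuclideanLin N = LinearMap.adjoint (toEuclideanLin Nᴴ) := by
    rw [← toEuclideanLin_conjTranspose_eq_adjoint, conjTranspose_conjTranspose]
  rw [toLpLin_mul_same, LinearMap.comp_apply, hN, LinearMap.adjoint_inner_right]
  exact inner_self_eq_norm_sq (𝕜 := ℂ) (toEuclideanLin Nᴴ x)

variable {𝕜 ι κ m d : Type*} [RCLike 𝕜] [Fintype ι] [DecidableEq ι] [Fintype m] [DecidableEq m]

lemma toEuclideanLin_submatrix_conjTranspose_apply (N : Matrix m d 𝕜) (e : ι ↪ m) (e' : κ ↪ d)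
    (x : EuclideanSpace 𝕜 ι) (j : κ) :
    toEuclideanLin (N.submatrix e e')ᴴ x j =
      toEuclideanLin Nᴴ (EuclideanSpace.extendByZero e x) (e' j) := by
  simp only [toLpLin_apply, PiLp.toLp_apply, mulVec, dotProduct, conjTranspose_apply,
    submatrix_apply]
  refine Fintype.sum_of_injective e e.injective _ _ (fun k hk => ?_) fun a => ?_
  · simp [EuclideanSpace.extendByZero_apply_of_notMem_range x hk]
  · simp

lemma norm_toEuclideanLin_submatrix_conjTranspose_le [Fintype κ] [Fintype d]
    (N : Matrix m d 𝕜) (e : ι ↪ m) (e' : κ ↪ d) (x : EuclideanSpace 𝕜 ι) :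
    ‖toEuclideanLin (N.submatrix e e')ᴴ x‖ ≤
      ‖toEuclideanLin Nᴴ (EuclideanSpace.extendByZero e x)‖ := by
  rw [EuclideanSpace.norm_eq, EuclideanSpace.norm_eq]
  gcongr
  simp_rw [toEuclideanLin_submatrix_conjTranspose_apply]
  rw [← Finset.sum_map _ e' fun k => ‖toEuclideanLin Nᴴ (EuclideanSpace.extendByZero e x) k‖ ^ 2]
  exact Finset.sum_le_sum_of_subset_of_nonneg (Finset.subset_univ _) fun _ _ _ => by positivity

end Matrix

theorem eigDesc_submatrix_mul_conjTranspose_le {n m c d : ℕ} (N : Matrix (Fin m) (Fin d) ℂ)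
    (e : Fin n ↪ Fin m) (e' : Fin c ↪ Fin d) (h : n ≤ m) (i : Fin n) :
    eigDesc (isHermitian_mul_conjTranspose_self (N.submatrix e e')) i ≤
      eigDesc (isHermitian_mul_conjTranspose_self N) (Fin.castLE h i) :=
  eigDesc_le_eigDesc_of_linearIsometry _ _ h (EuclideanSpace.extendByZero e) (fun x => by
    rw [re_inner_toEuclideanLin_mul_conjTranspose_self,
      re_inner_toEuclideanLin_mul_conjTranspose_self]
    gcongr
    exact norm_toEuclideanLin_submatrix_conjTranspose_le N e e' x) i

/-- **Lemma 1.** The estimated canonical correlation coefficients increase with increasing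
PCA ranks: for `1 ≤ r_x < r̃₁ ≤ p_x`, `1 ≤ r_y < r̃₂ ≤ p_y` and every
`i = 1, …, min(r_x, r_y)`, one has `k̂_i(r̃₁, r̃₂) ≥ k̂_i(r_x, r_y)`. -/
theorem kHat_mono_of_rank_le {M px py : ℕ}
    (Vx : Matrix (Fin M) (Fin px) ℂ) (Vy : Matrix (Fin M) (Fin py) ℂ)
    {rx r1 ry r2 : ℕ}
    (hrxr1 : rx < r1) (hr1 : r1 ≤ px)
    (hryr2 : ry < r2) (hr2 : r2 ≤ py)
    (i : ℕ) (hi : i < min rx ry) :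
    kHat Vx Vy r1 r2 hr1 hr2 ⟨i, by omega⟩ ≥
      kHat Vx Vy rx ry (by omega) (by omega) ⟨i, by omega⟩ := by
  have hrx : rx ≤ r1 := hrxr1.le
  have hry : ry ≤ r2 := hryr2.le
  exact Real.sqrt_le_sqrt (eigDesc_submatrix_mul_conjTranspose_le
    ((Vx.submatrix id (Fin.castLE hr1))ᴴ * Vy.submatrix id (Fin.castLE hr2))
    (Fin.castLEEmb hrx) (Fin.castLEEmb hry) hrx ⟨i, by omega⟩)
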